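/- arXiv:1512.04974 — 6 statements merged into one kernel-verified Lean document; each statement's English description precedes it below -/
import Mathlib

section
/- The multideviation seed functions are orthogonal and closed under the natural inner product: for σ, ρ ⊆ B and tuples x, z, ∑_{y ∈ ∏_{i∈B} A_i} q^σ(x_σ, y_σ) · q^ρ(y_ρ, z_ρ) = δ_{σ=ρ} · q^σ(x_σ, z_σ). -/
open Finset

/-- Multideviation seed function `q^σ(x,y)`. -/
noncomputable def msf {B : Type*} [Fintype B] [DecidableEq B] (A : B → Type*) [∀ i, Fintype (A i)]
    [∀ i, DecidableEq (A i)] (σ : Finset B) (x y : ∀ i, A i) : ℝ :=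
  (1 / ∏ i : B, (Fintype.card (A i) : ℝ)) *
    ∏ i ∈ σ, ((Fintype.card (A i) : ℝ) * (if x i = y i then 1 else 0) - 1)

/-- σ-multideviation of a function `f`. -/
noncomputable def mdev {B : Type*} [Fintype B] [DecidableEq B] (A : B → Type*) [∀ i, Fintype (A i)]
    [∀ i, DecidableEq (A i)] (σ : Finset B) (f : (∀ i, A i) → ℝ) (x : ∀ i, A i) : ℝ :=
  ∑ y : ∀ i, A i, f y * msf A σ x y

/-!
Up to the constant `1 / n_B`, `q^σ(x, y)` is a product over all coordinates `i` of the factor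
`e_i(x_i, y_i) = n_i δ_{x_i = y_i} - 1` for `i ∈ σ` and `1` for `i ∉ σ`. The sum over `y` of a
product of such coordinatewise kernels factors into a product of one-coordinate sums. Since
`e_i` has zero row and column sums and `∑_b e_i(a, b) e_i(b, c) = n_i e_i(a, c)`, the `i`-th sum
vanishes when `i` lies in exactly one of `σ`, `ρ`, and equals `n_i` times the `i`-th factor of
`q^σ(x, z)` otherwise; the product of the `n_i` cancels one of the two constants `1 / n_B`.
-/

namespace Multideviation

theorem sum_pi_prod_mul_prod {ι R : Type*} [Fintype ι] [DecidableEq ι] [CommSemiring R]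
    {κ : ι → Type*} [∀ i, Fintype (κ i)] (f g : ∀ i, κ i → R) :
    ∑ y : ∀ i, κ i, (∏ i, f i (y i)) * ∏ i, g i (y i) = ∏ i, ∑ a, f i a * g i a := by
  simp_rw [Fintype.prod_sum, prod_mul_distrib]

section SeedFactor

variable (α : Type*) [Fintype α] [DecidableEq α]

noncomputable def seedFactor (a b : α) : ℝ :=
  Fintype.card α * (if a = b then 1 else 0) - 1

variable {α}

theorem sum_seedFactor_left (a : α) : ∑ b, seedFactor α a b = 0 := by
  simp [seedFactor, sum_sub_distrib]

theorem sum_seedFactor_right (c : α) : ∑ b, seedFactor α b c = 0 := by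
  simp [seedFactor, sum_sub_distrib]

theorem sum_seedFactor_mul_seedFactor (a c : α) :
    ∑ b, seedFactor α a b * seedFactor α b c = Fintype.card α * seedFactor α a c := by
  calc ∑ b, seedFactor α a b * seedFactor α b c
      = ∑ b, ((Fintype.card α : ℝ) * (if a = b then seedFactor α b c else 0)
          - seedFactor α b c) := by
        refine sum_congr rfl fun b _ => ?_
        unfold seedFactor
        split_ifs <;> ring
    _ = Fintype.card α * seedFactor α a c := by
        rw [sum_sub_distrib, ← mul_sum, sum_ite_eq, sum_seedFactor_right, if_pos (mem_univ a),
          sub_zero]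

end SeedFactor

variable {B : Type*} [DecidableEq B] (A : B → Type*) [∀ i, Fintype (A i)]
  [∀ i, DecidableEq (A i)]

noncomputable def seedFactorOn (σ : Finset B) (i : B) (a b : A i) : ℝ :=
  if i ∈ σ then seedFactor (A i) a b else 1

theorem msf_eq_mul_prod_seedFactorOn [Fintype B] (σ : Finset B) (x y : ∀ i, A i) :
    msf A σ x y =
      (1 / ∏ i, (Fintype.card (A i) : ℝ)) * ∏ i, seedFactorOn A σ i (x i) (y i) := by
  simp only [msf, seedFactorOn, Fintype.prod_ite_mem, seedFactor]

theorem sum_seedFactorOn_mul_seedFactorOn (σ ρ : Finset B) (i : B) (a c : A i) :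
    ∑ b, seedFactorOn A σ i a b * seedFactorOn A ρ i b c =
      if (i ∈ σ ↔ i ∈ ρ) then Fintype.card (A i) * seedFactorOn A σ i a c else 0 := by
  by_cases hσ : i ∈ σ <;> by_cases hρ : i ∈ ρ <;>
    simp [seedFactorOn, hσ, hρ, sum_seedFactor_mul_seedFactor, sum_seedFactor_left,
      sum_seedFactor_right]

end Multideviation

open Multideviation in
theorem msf_orthogonal {B : Type*} [Fintype B] [DecidableEq B]
    (A : B → Type*) [∀ i, Fintype (A i)] [∀ i, DecidableEq (A i)] [∀ i, Nonempty (A i)]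
    (σ ρ : Finset B) (x z : ∀ i, A i) :
    ∑ y : ∀ i, A i, msf A σ x y * msf A ρ y z =
      (if σ = ρ then (1 : ℝ) else 0) * msf A σ x z := by
  have hN : ∏ i, (Fintype.card (A i) : ℝ) ≠ 0 :=
    prod_ne_zero_iff.mpr fun i _ => Nat.cast_ne_zero.mpr Fintype.card_ne_zero
  have hfactor : ∑ y : ∀ i, A i, msf A σ x y * msf A ρ y z =
      (1 / ∏ i, (Fintype.card (A i) : ℝ)) * (1 / ∏ i, (Fintype.card (A i) : ℝ)) *
        ∏ i, ∑ a, seedFactorOn A σ i (x i) a * seedFactorOn A ρ i a (z i) := by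
    simp_rw [msf_eq_mul_prod_seedFactorOn, ← sum_pi_prod_mul_prod, mul_sum]
    exact sum_congr rfl fun y _ => by ring
  have hmem : (∀ i ∈ (univ : Finset B), i ∈ σ ↔ i ∈ ρ) ↔ σ = ρ := by
    simp [Finset.ext_iff]
  rw [hfactor, msf_eq_mul_prod_seedFactorOn]
  simp_rw [sum_seedFactorOn_mul_seedFactorOn, prod_ite_zero, prod_mul_distrib, hmem]
  split_ifs
  · field_simp
  · simp
end

section
/- Any real-valued function f on ∏_{i∈B} A_i is uniquely decomposed by its multideviations: f(x) = ∑_{σ ⊆ B} Q^σ_f(x_σ), where Q^σ_f(x_σ) = ∑_{y} f(y) q^σ(x_σ, y_σ). -/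
open Finset

/-! The seed functions sum to the Kronecker delta: summing `∏ i ∈ σ, (g i - 1)` over all `σ ⊆ B`
gives `∏ i, g i`, and with `g i = nᵢ δ(xᵢ = yᵢ)` this is `n_B` if `x = y` and `0` otherwise.
Exchanging the sums over `σ` and `y` in `∑ σ, Q^σ_f(x)` then leaves `∑ y, f y δ(x = y) = f x`. -/

theorem Finset.sum_powerset_prod_sub_one {ι R : Type*} [CommRing R] (s : Finset ι) (g : ι → R) :
    ∑ t ∈ s.powerset, ∏ i ∈ t, (g i - 1) = ∏ i ∈ s, g i := by
  simpa using (prod_add_one (f := fun i => g i - 1) s).symm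

theorem sum_msf_eq_ite {B : Type*} [Fintype B] [DecidableEq B] (A : B → Type*)
    [∀ i, Fintype (A i)] [∀ i, DecidableEq (A i)] (x y : ∀ i, A i) :
    ∑ σ : Finset B, msf A σ x y = if x = y then 1 else 0 := by
  have hcard : ∏ i : B, (Fintype.card (A i) : ℝ) ≠ 0 :=
    prod_ne_zero_iff.mpr fun i _ => Nat.cast_ne_zero.mpr (@Fintype.card_ne_zero (A i) _ ⟨x i⟩)
  simp only [msf, ← mul_sum, ← powerset_univ, sum_powerset_prod_sub_one, mul_ite, mul_one, mul_zero,
    Fintype.prod_ite_zero, funext_iff]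
  rw [one_div_mul_cancel hcard]

theorem multideviation_decomposition_general {B : Type*} [Fintype B] [DecidableEq B]
    (A : B → Type*) [∀ i, Fintype (A i)] [∀ i, DecidableEq (A i)]
    (f : (∀ i, A i) → ℝ) (x : ∀ i, A i) :
    f x = ∑ σ : Finset B, mdev A σ f x := by
  calc f x = ∑ y, f y * if x = y then 1 else 0 := by simp
    _ = ∑ y, f y * ∑ σ : Finset B, msf A σ x y := by simp only [sum_msf_eq_ite]
    _ = ∑ σ : Finset B, mdev A σ f x := by simp only [mdev, mul_sum]; exact sum_comm

theorem multideviation_decomposition {B : Type*} [Fintype B] [DecidableEq B]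
    (A : B → Type*) [∀ i, Fintype (A i)] [∀ i, DecidableEq (A i)] [∀ i, Nonempty (A i)]
    (f : (∀ i, A i) → ℝ) (x : ∀ i, A i) :
    f x = ∑ σ : Finset B, mdev A σ f x :=
  multideviation_decomposition_general A f x
end

section
/- Multideviations are picked out by contraction with a seed function: for any f : ∏ A_i → ℝ and σ, μ ⊆ B, ∑_{x ∈ ∏ A_i} Q^σ_f(x_σ) · q^μ(x_μ, y_μ) = δ_{σ=μ} · Q^σ_f(y_σ). -/
open Finset

/-!
Write `g_i(a, b) = n_i δ_{a=b} - 1`, so that `q^σ(x, y) = n_B⁻¹ ∏_{i ∈ σ} g_i(x_i, y_i)`.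
The columns of `g_i` sum to zero and `∑_a g_i(a, c) g_i(a, d) = n_i g_i(c, d)`. Summing
`q^σ(x, w) q^μ(x, y)` over `x` therefore factors over the coordinates: a coordinate in exactly
one of `σ`, `μ` contributes `0`, and otherwise `g_i` reproduces itself, which gives
`∑_x q^σ(x, w) q^μ(x, y) = δ_{σ=μ} q^σ(w, y)`. The theorem follows by contracting with `f`.
-/

section DeviationFactor

variable (α : Type*) [Fintype α] [DecidableEq α]

noncomputable def deviationFactor (a b : α) : ℝ :=
  (Fintype.card α : ℝ) * (if a = b then 1 else 0) - 1

variable {α}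

lemma deviationFactor_comm (a b : α) : deviationFactor α a b = deviationFactor α b a := by
  simp only [deviationFactor, eq_comm]

lemma sum_deviationFactor (c : α) : ∑ a, deviationFactor α a c = 0 := by
  simp [deviationFactor, sum_sub_distrib, card_univ]

lemma sum_deviationFactor_mul_deviationFactor (c d : α) :
    ∑ a, deviationFactor α a c * deviationFactor α a d =
      Fintype.card α * deviationFactor α c d := by
  have h : ∀ a, deviationFactor α a c * deviationFactor α a d =
      Fintype.card α * ((if a = c then 1 else 0) * deviationFactor α c d) - deviationFactor α a d := by
    intro a
    by_cases hac : a = c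
    · subst hac; simp only [deviationFactor, if_true]; ring
    · simp only [deviationFactor, if_neg hac]; ring
  simp only [h, sum_sub_distrib, ← mul_sum, sum_deviationFactor, ite_mul, one_mul, zero_mul,
    sum_ite_eq', mem_univ, if_true, sub_zero]

lemma sum_ite_deviationFactor_mul_ite_deviationFactor (p q : Prop) [Decidable p] [Decidable q]
    (c d : α) :
    ∑ a, (if p then deviationFactor α a c else 1) * (if q then deviationFactor α a d else 1) =
      if (p ↔ q) then Fintype.card α * (if p then deviationFactor α c d else 1) else 0 := by
  by_cases hp : p <;> by_cases hq : q <;>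
    simp [hp, hq, sum_deviationFactor, sum_deviationFactor_mul_deviationFactor, card_univ]

end DeviationFactor

section Seed

variable {B : Type*} [Fintype B] [DecidableEq B] (A : B → Type*) [∀ i, Fintype (A i)]
  [∀ i, DecidableEq (A i)]

lemma msf_eq_prod (σ : Finset B) (x y : ∀ i, A i) :
    msf A σ x y = (∏ i, (Fintype.card (A i) : ℝ))⁻¹ *
      ∏ i, if i ∈ σ then deviationFactor (A i) (x i) (y i) else 1 := by
  rw [msf, one_div, prod_ite_mem, univ_inter]
  rfl

lemma msf_comm (σ : Finset B) (x y : ∀ i, A i) : msf A σ x y = msf A σ y x := by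
  simp only [msf_eq_prod, deviationFactor_comm (x _)]

lemma sum_msf_mul_msf (σ μ : Finset B) (w y : ∀ i, A i) :
    ∑ x, msf A σ x w * msf A μ x y = (if σ = μ then (1 : ℝ) else 0) * msf A σ w y := by
  set n : B → ℝ := fun i => Fintype.card (A i)
  set e : Finset B → B → (∀ i, A i) → (∀ i, A i) → ℝ :=
    fun s i x z => if i ∈ s then deviationFactor (A i) (x i) (z i) else 1
  have hn : ∏ i, n i ≠ 0 := prod_ne_zero_iff.2 fun i _ =>
    have : Nonempty (A i) := ⟨y i⟩
    Nat.cast_ne_zero.2 Fintype.card_ne_zero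
  calc ∑ x, msf A σ x w * msf A μ x y
      = (∏ i, n i)⁻¹ ^ 2 * ∑ x : ∀ i, A i, ∏ i, e σ i x w * e μ i x y := by
        simp only [msf_eq_prod, prod_mul_distrib, mul_sum]
        exact sum_congr rfl fun x _ => by ring
    _ = (∏ i, n i)⁻¹ ^ 2 * ∏ i, if (i ∈ σ ↔ i ∈ μ) then n i * e σ i w y else 0 := by
        rw [← Fintype.prod_sum (fun i (a : A i) =>
          (if i ∈ σ then deviationFactor (A i) a (w i) else 1) *
            (if i ∈ μ then deviationFactor (A i) a (y i) else 1))]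
        simp only [sum_ite_deviationFactor_mul_ite_deviationFactor, e, n]
    _ = (if σ = μ then (1 : ℝ) else 0) * msf A σ w y := by
        rw [Fintype.prod_ite_zero, prod_mul_distrib, msf_eq_prod]
        simp only [← Finset.ext_iff]
        split_ifs
        · simp only [e, n]
          field_simp
        · simp

end Seed

theorem multideviation_orthogonality_general {B : Type*} [Fintype B] [DecidableEq B]
    (A : B → Type*) [∀ i, Fintype (A i)] [∀ i, DecidableEq (A i)]
    (f : (∀ i, A i) → ℝ) (σ μ : Finset B) (y : ∀ i, A i) :
    ∑ x : ∀ i, A i, mdev A σ f x * msf A μ x y =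
      (if σ = μ then (1 : ℝ) else 0) * mdev A σ f y := by
  calc ∑ x, mdev A σ f x * msf A μ x y
      = ∑ z, f z * ∑ x, msf A σ x z * msf A μ x y := by
        simp only [mdev, sum_mul, mul_sum, mul_assoc]
        exact sum_comm
    _ = (if σ = μ then (1 : ℝ) else 0) * mdev A σ f y := by
        simp only [sum_msf_mul_msf, mdev, mul_sum, msf_comm A σ y]
        exact sum_congr rfl fun z _ => by ring

theorem multideviation_orthogonality {B : Type*} [Fintype B] [DecidableEq B]
    (A : B → Type*) [∀ i, Fintype (A i)] [∀ i, DecidableEq (A i)] [∀ i, Nonempty (A i)]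
    (f : (∀ i, A i) → ℝ) (σ μ : Finset B) (y : ∀ i, A i) :
    ∑ x : ∀ i, A i, mdev A σ f x * msf A μ x y =
      (if σ = μ then (1 : ℝ) else 0) * mdev A σ f y :=
  multideviation_orthogonality_general A f σ μ y
end

section
/- Nonnegativity of a probability distribution translates into multideviation inequalities: for every x ∈ ∏ A_i, ∑_{σ ⊆ B} Q^σ_P(x_σ) ≥ 0. -/
open Finset

theorem Fintype.sum_finset_prod_sub_one {ι R : Type*} [Fintype ι] [CommRing R] (f : ι → R) :
    ∑ σ : Finset ι, ∏ i ∈ σ, (f i - 1) = ∏ i, f i := by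
  rw [← powerset_univ, ← prod_add_one]
  simp only [sub_add_cancel]

section

variable {B : Type*} [Fintype B] [DecidableEq B] {A : B → Type*} [∀ i, Fintype (A i)]
  [∀ i, DecidableEq (A i)]

theorem sum_msf (x y : ∀ i, A i) : ∑ σ : Finset B, msf A σ x y = if x = y then 1 else 0 := by
  have hcard : ∀ i, (Fintype.card (A i) : ℝ) ≠ 0 := fun i =>
    have : Nonempty (A i) := ⟨x i⟩
    Nat.cast_ne_zero.2 Fintype.card_ne_zero
  simp only [msf, ← mul_sum, Fintype.sum_finset_prod_sub_one, mul_ite, mul_one, mul_zero,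
    Fintype.prod_ite_zero, ← funext_iff]
  split_ifs
  · exact one_div_mul_cancel (prod_ne_zero_iff.2 fun i _ => hcard i)
  · rfl

theorem sum_mdev (f : (∀ i, A i) → ℝ) (x : ∀ i, A i) : ∑ σ : Finset B, mdev A σ f x = f x := by
  simp only [mdev]
  rw [sum_comm]
  simp only [← mul_sum, sum_msf, mul_ite, mul_one, mul_zero, sum_ite_eq, mem_univ, if_true]

end

theorem multideviation_nonneg_sum_general {B : Type*} [Fintype B] [DecidableEq B]
    (A : B → Type*) [∀ i, Fintype (A i)] [∀ i, DecidableEq (A i)]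
    (Pr : (∀ i, A i) → ℝ) (hpos : ∀ x, 0 ≤ Pr x)
    (x : ∀ i, A i) :
    0 ≤ ∑ σ : Finset B, mdev A σ Pr x :=
  sum_mdev Pr x ▸ hpos x

theorem multideviation_nonneg_sum {B : Type*} [Fintype B] [DecidableEq B]
    (A : B → Type*) [∀ i, Fintype (A i)] [∀ i, DecidableEq (A i)] [∀ i, Nonempty (A i)]
    (Pr : (∀ i, A i) → ℝ) (hpos : ∀ x, 0 ≤ Pr x) (hsum : ∑ x : ∀ i, A i, Pr x = 1)
    (x : ∀ i, A i) :
    0 ≤ ∑ σ : Finset B, mdev A σ Pr x :=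
  multideviation_nonneg_sum_general A Pr hpos x
end

section
/- In the binary case, if Q^σ attains its maximum value Q^∅ = 1/2^{|B|}, then Q^ρ = Q^{σ Δ ρ} for every ρ ⊆ B (where Δ is symmetric difference); if Q^σ attains its minimum −Q^∅, then Q^ρ = −Q^{σ Δ ρ} for every ρ ⊆ B. -/
/-!
The factors `2 δ_{y_i = 1} - 1` are `±1`, so `τ ↦ ∏_{i ∈ τ} (2 δ_{y_i = 1} - 1)` is a `±1`-valued
character of `(Finset B, Δ)`, and `2^{|B|} Q^τ` is its `P`-mean. The mean of a quantity bounded by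
`1` equals `1` only if the quantity is `1` `P`-almost surely; so `Q^σ = ±Q^∅` forces the character
at `σ` to be `±1` on the support of `P`, and then `Q^{σ Δ ρ}`, the mean of the product of the
characters at `σ` and `ρ`, is `±Q^ρ`.
-/

open Finset

/-- In the binary case (all outcome sets `Fin 2`, with `0` representing outcome 1 and
`1` representing outcome 2), the σ-multideviation of `P` at the all-ones tuple. -/
noncomputable def binQ {B : Type*} [Fintype B] [DecidableEq B]
    (Pr : (B → Fin 2) → ℝ) (σ : Finset B) : ℝ :=
  ∑ y : B → Fin 2, Pr y * ((1 / (2 : ℝ) ^ Fintype.card B) *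
    ∏ i ∈ σ, (2 * (if y i = 0 then (1 : ℝ) else 0) - 1))

theorem Finset.prod_symmDiff_of_mul_self_eq_one {ι M : Type*} [DecidableEq ι] [CommMonoid M]
    {f : ι → M} (hf : ∀ i, f i * f i = 1) (s t : Finset ι) :
    ∏ i ∈ symmDiff s t, f i = (∏ i ∈ s, f i) * ∏ i ∈ t, f i := by
  rw [← prod_union_inter, symmDiff_eq_sup_sdiff_inf,
    ← prod_sdiff (inter_subset_union (s := s) (t := t)), mul_assoc, ← prod_mul_distrib,
    prod_congr rfl fun i _ => hf i, prod_const_one, mul_one]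
  rfl

theorem Finset.mul_eq_self_of_sum_mul_eq_sum {ι : Type*} {s : Finset ι} {p g : ι → ℝ}
    (hp : ∀ i ∈ s, 0 ≤ p i) (hg : ∀ i ∈ s, g i ≤ 1) (h : ∑ i ∈ s, p i * g i = ∑ i ∈ s, p i) :
    ∀ i ∈ s, p i * g i = p i :=
  (sum_eq_sum_iff_of_le fun i hi => mul_le_of_le_one_right (hp i hi) (hg i hi)).mp h

theorem Finset.sum_mul_mul_eq_of_sum_mul_eq_sum {ι : Type*} {s : Finset ι} {p g : ι → ℝ}
    (hp : ∀ i ∈ s, 0 ≤ p i) (hg : ∀ i ∈ s, g i ≤ 1) (h : ∑ i ∈ s, p i * g i = ∑ i ∈ s, p i)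
    (f : ι → ℝ) : ∑ i ∈ s, p i * g i * f i = ∑ i ∈ s, p i * f i :=
  sum_congr rfl fun i hi => by rw [mul_eq_self_of_sum_mul_eq_sum hp hg h i hi]

section Binary

variable {B : Type*}

def binSign (y : B → Fin 2) (i : B) : ℝ := 2 * (if y i = 0 then 1 else 0) - 1

lemma binSign_mul_self (y : B → Fin 2) (i : B) : binSign y i * binSign y i = 1 := by
  unfold binSign; split_ifs <;> norm_num

lemma abs_binSign (y : B → Fin 2) (i : B) : |binSign y i| = 1 := by
  unfold binSign; split_ifs <;> norm_num

lemma abs_prod_binSign (y : B → Fin 2) (τ : Finset B) : |∏ i ∈ τ, binSign y i| = 1 := by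
  rw [abs_prod, prod_congr rfl fun i _ => abs_binSign y i, prod_const_one]

variable [Fintype B] [DecidableEq B]

lemma binQ_eq (Pr : (B → Fin 2) → ℝ) (τ : Finset B) :
    binQ Pr τ = 1 / (2 : ℝ) ^ Fintype.card B * ∑ y, Pr y * ∏ i ∈ τ, binSign y i := by
  rw [binQ, mul_sum]
  exact sum_congr rfl fun y _ => by unfold binSign; ring

lemma binQ_symmDiff (Pr : (B → Fin 2) → ℝ) (σ ρ : Finset B) :
    binQ Pr (symmDiff σ ρ) =
      1 / (2 : ℝ) ^ Fintype.card B * ∑ y, Pr y * (∏ i ∈ σ, binSign y i) * ∏ i ∈ ρ, binSign y i := by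
  simp only [binQ_eq, prod_symmDiff_of_mul_self_eq_one (binSign_mul_self _), mul_assoc]

end Binary

theorem binary_multideviation_extremes {B : Type*} [Fintype B] [DecidableEq B]
    (Pr : (B → Fin 2) → ℝ) (hpos : ∀ x, 0 ≤ Pr x) (hsum : ∑ x : B → Fin 2, Pr x = 1)
    (σ : Finset B) :
    (binQ Pr σ = 1 / (2 : ℝ) ^ Fintype.card B →
      ∀ ρ : Finset B, binQ Pr ρ = binQ Pr (symmDiff σ ρ)) ∧
    (binQ Pr σ = -(1 / (2 : ℝ) ^ Fintype.card B) →
      ∀ ρ : Finset B, binQ Pr ρ = -binQ Pr (symmDiff σ ρ)) := by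
  have hc : (1 / (2 : ℝ) ^ Fintype.card B) ≠ 0 := by positivity
  have hle : ∀ y ∈ univ, |∏ i ∈ σ, binSign y i| ≤ 1 := fun y _ => (abs_prod_binSign y σ).le
  constructor
  · intro hmax ρ
    have hσ : ∑ y, Pr y * ∏ i ∈ σ, binSign y i = ∑ y, Pr y := by
      rw [binQ_eq] at hmax
      exact (mul_right_injective₀ hc (hmax.trans (mul_one _).symm)).trans hsum.symm
    rw [binQ_symmDiff, sum_mul_mul_eq_of_sum_mul_eq_sum (fun y _ => hpos y)
      (fun y hy => (le_abs_self _).trans (hle y hy)) hσ, binQ_eq]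
  · intro hmin ρ
    have hσ : ∑ y, Pr y * -∏ i ∈ σ, binSign y i = ∑ y, Pr y := by
      rw [binQ_eq] at hmin
      have hσ' : ∑ y, Pr y * ∏ i ∈ σ, binSign y i = -1 :=
        mul_right_injective₀ hc (hmin.trans (mul_neg_one _).symm)
      simp only [mul_neg, sum_neg_distrib, hσ', hsum, neg_neg]
    have := sum_mul_mul_eq_of_sum_mul_eq_sum (fun y _ => hpos y)
      (fun y hy => (neg_le_abs _).trans (hle y hy)) hσ (fun y => ∏ i ∈ ρ, binSign y i)
    rw [binQ_symmDiff, binQ_eq, ← this]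
    simp only [mul_neg, neg_mul, sum_neg_distrib]
end

section
/- The odd-out transformation is an involution: for any finite set z and any S ⊆ 𝒫(z), defining S* = { σ ⊆ z : |S ∩ 𝒫(σ)| is odd }, one has S** = S. -/
/-!
Over `𝔽₂`, the indicator of `S*` is the subset-sum transform `f ↦ (σ ↦ ∑_{τ ⊆ σ} f τ)` of the
indicator of `S`. Applying this transform twice weights `f τ` by the size `2 ^ |ρ \ τ|` of the
interval `[τ, ρ]` of the Boolean lattice, which is even unless `τ = ρ`; so the transform is an
involution.
-/

open Finset

/-- The odd-out transform of a family `S` of subsets of `z`. -/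
def oddOut {z : Type*} [Fintype z] [DecidableEq z] (S : Finset (Finset z)) :
    Finset (Finset z) :=
  Finset.univ.filter (fun σ => Odd ((S.filter (fun τ => τ ⊆ σ)).card))

section CharTwo

variable {α R : Type*} [DecidableEq α] [Semiring R] [CharP R 2]

lemma natCast_card_Icc_finset_of_charTwo (τ ρ : Finset α) :
    ((Icc τ ρ).card : R) = if τ = ρ then 1 else 0 := by
  by_cases hτρ : τ ⊆ ρ
  · rw [card_Icc_finset hτρ]
    split_ifs with h
    · simp [h]
    · have : 0 < ρ.card - τ.card :=
        Nat.sub_pos_of_lt (card_lt_card (ssubset_of_subset_of_ne hτρ h))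
      simp [CharTwo.two_eq_zero, zero_pow this.ne']
  · rw [Icc_eq_empty hτρ, if_neg (by rintro rfl; exact hτρ subset_rfl), card_empty, Nat.cast_zero]

theorem sum_powerset_sum_powerset_of_charTwo (f : Finset α → R) (ρ : Finset α) :
    ∑ σ ∈ ρ.powerset, ∑ τ ∈ σ.powerset, f τ = f ρ :=
  calc ∑ σ ∈ ρ.powerset, ∑ τ ∈ σ.powerset, f τ
      = ∑ τ ∈ ρ.powerset, ∑ _σ ∈ Icc τ ρ, f τ :=
        sum_comm' fun σ τ => by simp only [mem_powerset, mem_Icc]; grind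
    _ = ∑ τ ∈ ρ.powerset, ((Icc τ ρ).card : R) * f τ := by simp only [sum_const, nsmul_eq_mul]
    _ = f ρ := by simp [natCast_card_Icc_finset_of_charTwo]

end CharTwo

lemma ite_mem_oddOut {z : Type*} [Fintype z] [DecidableEq z] (S : Finset (Finset z))
    (σ : Finset z) :
    (if σ ∈ oddOut S then 1 else 0 : ZMod 2) = ∑ τ ∈ σ.powerset, if τ ∈ S then 1 else 0 := by
  have : σ.powerset.filter (· ∈ S) = S.filter (· ⊆ σ) := by ext; simp [and_comm]
  rw [sum_boole, this, CharTwo.natCast_eq_ite]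
  simp only [oddOut, mem_filter, mem_univ, true_and, ← Nat.not_even_iff_odd, ite_not]

theorem oddOut_involutive {z : Type*} [Fintype z] [DecidableEq z]
    (S : Finset (Finset z)) : oddOut (oddOut S) = S := by
  ext ρ
  have h := sum_powerset_sum_powerset_of_charTwo (R := ZMod 2)
    (fun τ => if τ ∈ S then 1 else 0) ρ
  simp only [← ite_mem_oddOut] at h
  by_cases ρ ∈ oddOut (oddOut S) <;> by_cases ρ ∈ S <;> simp_all
end
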